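/- Let K be a compact metrizable topological space, let (ν_α)_{α∈A} be a net of Borel probability measures on K, let (t_α)_{α∈A} be a net of positive reals converging to 0, and let I : K → [0,+∞] be lower semicontinuous with {x ∈ K : I(x) = 0} = {x₀} a singleton. If limsup_α t_α log ν_α(F) ≤ −inf_{x∈F} I(x) for every closed set F ⊆ K, then the net (ν_α) converges, in the topology of weak convergence of probability measures, to the Dirac measure δ_{x₀}. -/

import Mathlib

/-!
A lower semicontinuous rate function attains its infimum on a closed, hence compact, set `F`,
so that infimum is positive when `F` avoids the unique zero `x₀` of `I`. The upper bound then
forces `ν_α(F) ≤ exp (-c / t_α) → 0` for some `c > 0`. A net of probability measures giving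
vanishing mass to every closed set away from `x₀` converges weakly to `δ_{x₀}`: for bounded
continuous `f`, split `∫ (f - f x₀) dν_α` over `{ε/2 ≤ |f - f x₀|}` and its complement.
-/

open MeasureTheory Filter Topology
open scoped ENNReal

theorem LowerSemicontinuousOn.lt_biInf_of_isCompact {X β : Type*} [TopologicalSpace X]
    [CompleteLinearOrder β] {f : X → β} {s : Set X} (hs : IsCompact s)
    (hf : LowerSemicontinuousOn f s) {b : β} (hb : b < ⊤) (hlt : ∀ x ∈ s, b < f x) :
    b < ⨅ x ∈ s, f x := by
  rcases s.eq_empty_or_nonempty with rfl | hne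
  · simpa using hb
  obtain ⟨a, ha, hmin⟩ := hf.exists_isMinOn hne hs
  exact (hlt a ha).trans_le (le_iInf₂ hmin)

theorem tendsto_zero_of_limsup_mul_log_lt_zero {ι : Type*} {l : Filter ι} {t : ι → ℝ}
    {m : ι → ℝ≥0∞} (ht : ∀ᶠ i in l, 0 < t i) (htlim : Tendsto t l (𝓝 0))
    (h : limsup (fun i => (t i : EReal) * ENNReal.log (m i)) l < 0) :
    Tendsto m l (𝓝 0) := by
  obtain ⟨c, hc, hc0⟩ := EReal.exists_between_coe_real h
  have hbound : ∀ᶠ i in l, (t i : EReal) * ENNReal.log (m i) < c := eventually_lt_of_limsup_lt hc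
  have hlog : Tendsto (fun i => ENNReal.log (m i)) l (𝓝 ⊥) := by
    refine EReal.tendsto_nhds_bot_iff_real.mpr fun r => ?_
    have hr : ∀ᶠ i in l, c < t i * r := by
      refine (htlim.mul_const r).eventually_const_lt ?_
      simpa using EReal.coe_lt_coe_iff.mp hc0
    filter_upwards [ht, hbound, hr] with i hti hi hri
    by_contra! hle
    have hmul : ((t i * r : ℝ) : EReal) ≤ t i * ENNReal.log (m i) := by
      rw [EReal.coe_mul]
      exact mul_le_mul_of_nonneg_left hle (EReal.coe_nonneg.mpr hti.le)
    exact hmul.trans_lt hi |>.not_ge (EReal.coe_le_coe_iff.mpr hri.le)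
  simpa [Function.comp_def] using EReal.tendsto_exp_nhds_bot_nhds_zero.comp hlog

theorem norm_integral_le_of_norm_le_off {X E : Type*} [MeasurableSpace X]
    [NormedAddCommGroup E] [NormedSpace ℝ E] {μ : Measure X} [IsProbabilityMeasure μ]
    {g : X → E} (hg : Integrable g μ) {s : Set X} (hs : MeasurableSet s) {C δ : ℝ}
    (hC : ∀ x ∈ s, ‖g x‖ ≤ C) (hδ : ∀ x ∉ s, ‖g x‖ ≤ δ) (hδ0 : 0 ≤ δ) :
    ‖∫ x, g x ∂μ‖ ≤ C * μ.real s + δ := by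
  rw [← integral_add_compl hs hg]
  calc ‖(∫ x in s, g x ∂μ) + ∫ x in sᶜ, g x ∂μ‖
      ≤ ‖∫ x in s, g x ∂μ‖ + ‖∫ x in sᶜ, g x ∂μ‖ := norm_add_le _ _
    _ ≤ C * μ.real s + δ * μ.real sᶜ := by
      gcongr
      · exact norm_setIntegral_le_of_norm_le_const (measure_lt_top μ s) hC
      · exact norm_setIntegral_le_of_norm_le_const (measure_lt_top μ sᶜ) hδ
    _ ≤ C * μ.real s + δ := by
      gcongr
      exact mul_le_of_le_one_right hδ0 measureReal_le_one

theorem MeasureTheory.ProbabilityMeasure.tendsto_dirac_of_forall_isClosed {X ι : Type*} [TopologicalSpace X]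
    [MeasurableSpace X] [OpensMeasurableSpace X] {l : Filter ι} {ν : ι → ProbabilityMeasure X}
    {x₀ : X}
    (h : ∀ F, IsClosed F → x₀ ∉ F → Tendsto (fun i => (ν i : Measure X) F) l (𝓝 0)) :
    Tendsto ν l (𝓝 ⟨Measure.dirac x₀, inferInstance⟩) := by
  refine ProbabilityMeasure.tendsto_iff_forall_integral_tendsto.mpr fun f => ?_
  rw [ProbabilityMeasure.coe_mk, integral_dirac' _ _ f.continuous.stronglyMeasurable]
  refine Metric.tendsto_nhds.mpr fun ε hε => ?_
  set F := {x | ε / 2 ≤ dist (f x) (f x₀)}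
  have hF : IsClosed F := isClosed_le continuous_const (f.continuous.dist continuous_const)
  have hx₀ : x₀ ∉ F := by simpa [F] using half_pos hε
  have hsmall : ∀ᶠ i in l, 2 * ‖f‖ * (ν i : Measure X).real F < ε / 2 := by
    have hreal : Tendsto (fun i => (ν i : Measure X).real F) l (𝓝 0) :=
      (ENNReal.tendsto_toReal_zero_iff fun _ => measure_ne_top _ _).mpr (h F hF hx₀)
    exact (mul_zero (2 * ‖f‖) ▸ hreal.const_mul (2 * ‖f‖)).eventually_lt_const (half_pos hε)
  filter_upwards [hsmall] with i hi
  have hint : ∫ x, f x ∂(ν i : Measure X) - f x₀ = ∫ x, (f x - f x₀) ∂(ν i : Measure X) := by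
    simp [integral_sub (f.integrable _) (integrable_const _)]
  rw [dist_eq_norm, hint]
  calc _ ≤ 2 * ‖f‖ * (ν i : Measure X).real F + ε / 2 :=
        norm_integral_le_of_norm_le_off ((f.integrable _).sub (integrable_const _))
          hF.measurableSet (fun x _ => f.dist_le_two_norm x x₀)
          (fun x hx => (not_le.mp hx).le) (half_pos hε).le
    _ < ε := by linarith

theorem tendsto_dirac_of_unique_rate_zero_general
    {K : Type*} [TopologicalSpace K] [CompactSpace K]
    [MeasurableSpace K] [BorelSpace K]
    {A : Type*} [Preorder A]
    (ν : A → ProbabilityMeasure K)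
    (t : A → ℝ) (htpos : ∀ α, 0 < t α) (htlim : Tendsto t atTop (𝓝 0))
    (I : K → EReal) (hIpos : ∀ x, 0 ≤ I x) (hIlsc : LowerSemicontinuous I)
    (x₀ : K) (hzero : {x : K | I x = 0} = {x₀})
    (hub : ∀ F : Set K, IsClosed F →
      Filter.limsup (fun α => (t α : EReal) * ENNReal.log ((ν α : Measure K) F))
        Filter.atTop ≤ -(⨅ x ∈ F, I x)) :
    Tendsto ν atTop (𝓝 (⟨Measure.dirac x₀, inferInstance⟩ : ProbabilityMeasure K)) := by
  refine ProbabilityMeasure.tendsto_dirac_of_forall_isClosed fun F hF hx₀ => ?_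
  have hFpos : ∀ x ∈ F, 0 < I x := by
    intro x hxF
    refine (hIpos x).lt_of_ne' fun hIx => hx₀ ?_
    have hx : x ∈ ({x₀} : Set K) := hzero ▸ hIx
    rwa [← Set.mem_singleton_iff.mp hx]
  have hinf : 0 < ⨅ x ∈ F, I x :=
    (hIlsc.lowerSemicontinuousOn F).lt_biInf_of_isCompact hF.isCompact EReal.zero_lt_top hFpos
  exact tendsto_zero_of_limsup_mul_log_lt_zero (.of_forall htpos) htlim
    ((hub F hF).trans_lt (EReal.neg_lt_zero.mpr hinf))

/-- If a net of Borel probability measures on a compact metrizable space satisfies the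
large deviation upper bound with a lower semicontinuous `[0,+∞]`-valued rate function `I`
whose zero set is a singleton `{x₀}`, then the net converges weakly to the Dirac measure
at `x₀`. -/
theorem tendsto_dirac_of_unique_rate_zero
    {K : Type*} [TopologicalSpace K] [CompactSpace K] [TopologicalSpace.MetrizableSpace K]
    [MeasurableSpace K] [BorelSpace K]
    {A : Type*} [Preorder A] [IsDirected A (· ≤ ·)] [Nonempty A]
    (ν : A → ProbabilityMeasure K)
    (t : A → ℝ) (htpos : ∀ α, 0 < t α) (htlim : Tendsto t atTop (𝓝 0))
    (I : K → EReal) (hIpos : ∀ x, 0 ≤ I x) (hIlsc : LowerSemicontinuous I)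
    (x₀ : K) (hzero : {x : K | I x = 0} = {x₀})
    (hub : ∀ F : Set K, IsClosed F →
      Filter.limsup (fun α => (t α : EReal) * ENNReal.log ((ν α : Measure K) F))
        Filter.atTop ≤ -(⨅ x ∈ F, I x)) :
    Tendsto ν atTop (𝓝 (⟨Measure.dirac x₀, inferInstance⟩ : ProbabilityMeasure K)) :=
  tendsto_dirac_of_unique_rate_zero_general ν t htpos htlim I hIpos hIlsc x₀ hzero hub
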